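/- One-step lower bound on the augmented Lagrangian: under assumptions (A1)-(A3), along the asynchronous proximal ADMM iterates one has y_{kj}^{t+1} = −[∇g_k(z_k^{[t+1]_k})]_j for all j ∈ N_k, and for every t: L({x_k^{t+1}}, z^{t+1}, {y_k^{t+1}}) ≥ P + Σ_{k=1}^K [ ((ρ_k − 4L_k)/2) Σ_{j∈N_k} ‖x_{kj}^{t+1} − z_j^{t+1}‖² − (L_k/2) Σ_{j∈N_k} ‖z_j^{t+1} − z_j^{[t+1]_k}‖² ], where P is the optimal value of the problem min Σ_k g_k({x_n}_{n∈N_k}) + h_k(x_k) subject to x_k ∈ X_k for all k. -/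

import Mathlib

open Filter Topology RealInnerProductSpace

noncomputable section

/-- Zero-padded restriction of a vector of nodal variables to a neighborhood:
coordinates outside the neighborhood are set to zero. -/
def restr {K : ℕ} (Nk : Finset (Fin K)) (v : Fin K → ℝ) : EuclideanSpace ℝ (Fin K) :=
  WithLp.toLp 2 (fun j => if j ∈ Nk then v j else 0)

/-- The setting of the asynchronous proximal ADMM: network data, assumptions
(A1)-(A2), and the algorithmic update equations (i)-(iii) together with the
delay bounds and the update-frequency condition. -/
structure ProxADMM (K : ℕ) where
  /-- neighborhoods, `j ∈ Nb k` means `j ∈ N_k` -/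
  Nb : Fin K → Finset (Fin K)
  self_mem : ∀ k, k ∈ Nb k
  symm : ∀ k j, j ∈ Nb k ↔ k ∈ Nb j
  /-- local cost of node `k`, as a function of the zero-padded neighborhood variables -/
  g : Fin K → EuclideanSpace ℝ (Fin K) → ℝ
  g_local : ∀ k v w, (∀ j ∈ Nb k, v j = w j) → g k v = g k w
  /-- the Lipschitz constants of (A1) -/
  L : Fin K → ℝ
  L_pos : ∀ k, 0 < L k
  g_diff : ∀ k, Differentiable ℝ (g k)
  /-- (A1): the gradient of `g k` is `L k`-Lipschitz -/
  g_grad_lip : ∀ k v w, ‖gradient (g k) v - gradient (g k) w‖ ≤ L k * ‖v - w‖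
  /-- the convex nonsmooth part -/
  h : Fin K → ℝ → ℝ
  h_convex : ∀ k, ConvexOn ℝ Set.univ (h k)
  /-- the constraint sets -/
  Xs : Fin K → Set ℝ
  Xs_nonempty : ∀ k, (Xs k).Nonempty
  Xs_compact : ∀ k, IsCompact (Xs k)
  Xs_convex : ∀ k, Convex ℝ (Xs k)
  /-- (A2): `g k` is bounded below over the constraint set -/
  g_bddBelow : ∀ k, ∃ b, ∀ v : Fin K → ℝ, (∀ j, v j ∈ Xs j) → b ≤ g k (restr (Nb k) v)
  /-- penalty parameters -/
  ρ : Fin K → ℝ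
  ρ_pos : ∀ k, 0 < ρ k
  /-- update frequencies `f_k` -/
  freq : Fin K → ℝ
  freq_pos : ∀ k, 0 < freq k
  freq_le_one : ∀ k, freq k ≤ 1
  /-- maximum delays `T_k` -/
  Td : Fin K → ℕ
  /-- updating sets `S^t` -/
  Sset : ℕ → Finset (Fin K)
  /-- delayed index: `τ t k = [t+1]_k` -/
  τ : ℕ → Fin K → ℕ
  τ_le : ∀ t k, τ t k ≤ t + 1
  τ_ge : ∀ t k, t + 1 ≤ τ t k + Td k
  /-- iterates -/
  x : ℕ → Fin K → Fin K → ℝ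
  z : ℕ → Fin K → ℝ
  y : ℕ → Fin K → Fin K → ℝ
  z_init_mem : ∀ j, z 0 j ∈ Xs j
  /-- (i): feasibility of the `z`-update -/
  z_update_mem : ∀ t j, j ∈ Sset t → z (t + 1) j ∈ Xs j
  /-- (i): for `j ∈ S^t`, `z_j^{t+1}` minimizes the `j`-th block over `X_j` -/
  z_update_min : ∀ t j, j ∈ Sset t → IsMinOn
      (fun w => h j w + ∑ k ∈ Nb j, (y t k j * (x t k j - w) + ρ k / 2 * (x t k j - w) ^ 2))
      (Xs j) (z (t + 1) j)
  /-- (i): non-updating nodes keep their old value -/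
  z_noupdate : ∀ t j, j ∉ Sset t → z (t + 1) j = z t j
  /-- (ii): proximal (linearized) `x`-update with delayed gradient -/
  x_update : ∀ t k, ∀ j ∈ Nb k,
      x (t + 1) k j = z (t + 1) j
        - (1 / ρ k) * (gradient (g k) (restr (Nb k) (z (τ t k))) j + y t k j)
  /-- (iii): dual update -/
  y_update : ∀ t k, ∀ j ∈ Nb k,
      y (t + 1) k j = y t k j + ρ k * (x (t + 1) k j - z (t + 1) j)
  /-- in any window of `T` consecutive iterations node `k` updates at least `f_k T` times -/
  update_freq : ∀ k (t₀ T : ℕ),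
      freq k * T ≤ ((Finset.Ico t₀ (t₀ + T)).filter (fun t => k ∈ Sset t)).card

/-- The augmented Lagrangian. -/
def ProxADMM.Lag {K : ℕ} (P : ProxADMM K) (xx : Fin K → Fin K → ℝ) (zz : Fin K → ℝ)
    (yy : Fin K → Fin K → ℝ) : ℝ :=
  ∑ k, (P.g k (restr (P.Nb k) (xx k)) + P.h k (zz k)
    + ∑ j ∈ P.Nb k, (yy k j * (xx k j - zz j) + P.ρ k / 2 * (xx k j - zz j) ^ 2))

end

/-!
By the dual update, `y^{t+1}_{kj} = -[∇g_k(w_k)]_j` with the stale point `w_k = z_k^{[t+1]_k}`,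
so node `k`'s share of the augmented Lagrangian is
`g_k(x_k) - ⟪∇g_k(w_k), x_k - z_k⟫ + (ρ_k/2)‖x_k - z_k‖²`. The descent lemma for `g_k` at `z_k`,
with the stale gradient corrected by Cauchy–Schwarz and the Lipschitz bound
`‖∇g_k(z_k) - ∇g_k(w_k)‖ ≤ L_k‖z_k - w_k‖`, bounds this below by
`g_k(z_k) + ((ρ_k - 2L_k)/2)‖x_k - z_k‖² - (L_k/2)‖z_k - w_k‖²`.
Summing over `k`, the `z`-iterates are feasible, so `Σ_k g_k(z_k) + h_k(z_k) ≥ P`.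
-/

section Descent

variable {F : Type*} [NormedAddCommGroup F] [InnerProductSpace ℝ F] [CompleteSpace F]
  {f : F → ℝ} {L : ℝ}

lemma hasDerivAt_comp_line (hf : Differentiable ℝ f) (v d : F) (s : ℝ) :
    HasDerivAt (fun s : ℝ => f (v + s • d)) ⟪gradient f (v + s • d), d⟫ s := by
  have hline : HasDerivAt (fun s : ℝ => v + s • d) d s := by
    simpa using ((hasDerivAt_id s).smul_const d).const_add v
  simpa [InnerProductSpace.toDual_apply_apply, Function.comp_def] using
    (hf _).hasGradientAt.hasFDerivAt.comp_hasDerivAt s hline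

theorem descent_lemma (hf : Differentiable ℝ f)
    (hlip : ∀ a b, ‖gradient f a - gradient f b‖ ≤ L * ‖a - b‖) (v u : F) :
    f v + ⟪gradient f v, u - v⟫ - L / 2 * ‖u - v‖ ^ 2 ≤ f u := by
  set d := u - v
  -- `ψ' ≥ 0` on `[0, 1]` by the Lipschitz bound, and `ψ 0 ≤ ψ 1` is the claim
  let ψ : ℝ → ℝ := fun s => f (v + s • d) - s * ⟪gradient f v, d⟫ + L / 2 * s ^ 2 * ‖d‖ ^ 2
  have hψ : ∀ s, HasDerivAt ψ (⟪gradient f (v + s • d) - gradient f v, d⟫ + L * s * ‖d‖ ^ 2) s := by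
    intro s
    refine (((hasDerivAt_comp_line hf v d s).sub
      ((hasDerivAt_id s).mul_const ⟪gradient f v, d⟫)).add
      (((hasDerivAt_pow 2 s).const_mul (L / 2)).mul_const (‖d‖ ^ 2))).congr_deriv ?_
    rw [inner_sub_left]
    simp only [Nat.cast_ofNat]
    ring
  have hψ'_nonneg : ∀ s ∈ Set.Icc (0 : ℝ) 1,
      0 ≤ ⟪gradient f (v + s • d) - gradient f v, d⟫ + L * s * ‖d‖ ^ 2 := by
    intro s hs
    have hstep : ‖gradient f (v + s • d) - gradient f v‖ ≤ L * (s * ‖d‖) := by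
      simpa [norm_smul, abs_of_nonneg hs.1] using hlip (v + s • d) v
    have hcs := neg_le_of_abs_le (abs_real_inner_le_norm (gradient f (v + s • d) - gradient f v) d)
    nlinarith [mul_le_mul_of_nonneg_right hstep (norm_nonneg d)]
  have hmono : MonotoneOn ψ (Set.Icc 0 1) :=
    monotoneOn_of_hasDerivWithinAt_nonneg (convex_Icc 0 1)
      (fun s _ => (hψ s).continuousAt.continuousWithinAt)
      (fun s _ => (hψ s).hasDerivWithinAt) (fun s hs => hψ'_nonneg s (interior_subset hs))
  have h01 : ψ 0 ≤ ψ 1 := hmono (by simp) (by simp) zero_le_one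
  simp only [ψ, zero_smul, add_zero, one_smul, zero_mul, mul_zero, one_mul, mul_one, sub_zero,
    zero_pow two_ne_zero, one_pow] at h01
  rw [show v + d = u from add_sub_cancel v u] at h01
  linarith

theorem descent_lemma_of_stale_gradient (hf : Differentiable ℝ f)
    (hlip : ∀ a b, ‖gradient f a - gradient f b‖ ≤ L * ‖a - b‖) (hL : 0 ≤ L) (u v w : F) :
    f v + ⟪gradient f w, u - v⟫ - L * ‖u - v‖ ^ 2 - L / 2 * ‖v - w‖ ^ 2 ≤ f u := by
  have hdesc := descent_lemma hf hlip v u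
  have hcs := neg_le_of_abs_le (abs_real_inner_le_norm (gradient f v - gradient f w) (u - v))
  have hstale := mul_le_mul_of_nonneg_right (hlip v w) (norm_nonneg (u - v))
  rw [inner_sub_left] at hcs
  nlinarith [mul_nonneg hL (sq_nonneg (‖u - v‖ - ‖v - w‖))]

end Descent

section Restriction

variable {K : ℕ} (s : Finset (Fin K))

lemma restr_sub (a b : Fin K → ℝ) : restr s a - restr s b = restr s (a - b) := by
  ext j
  by_cases hj : j ∈ s <;> simp [restr, hj]

lemma norm_restr_sq (c : Fin K → ℝ) : ‖restr s c‖ ^ 2 = ∑ j ∈ s, c j ^ 2 := by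
  simp [EuclideanSpace.norm_sq_eq, restr, apply_ite, Finset.sum_ite_mem]

lemma inner_restr (g : EuclideanSpace ℝ (Fin K)) (c : Fin K → ℝ) :
    ⟪g, restr s c⟫ = ∑ j ∈ s, g j * c j := by
  simp [PiLp.inner_apply, restr, mul_comm, Finset.sum_ite_mem]

end Restriction

namespace ProxADMM

variable {K : ℕ} (P : ProxADMM K)

def objective (u : Fin K → ℝ) : ℝ :=
  ∑ k, (P.g k (restr (P.Nb k) u) + P.h k (u k))

lemma y_succ_eq_neg_gradient (t : ℕ) (k : Fin K) {j : Fin K} (hj : j ∈ P.Nb k) :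
    P.y (t + 1) k j = - gradient (P.g k) (restr (P.Nb k) (P.z (P.τ t k))) j := by
  rw [P.y_update t k j hj, P.x_update t k j hj]
  field_simp [(P.ρ_pos k).ne']
  ring

lemma z_mem_Xs (t : ℕ) (j : Fin K) : P.z t j ∈ P.Xs j := by
  induction t generalizing j with
  | zero => exact P.z_init_mem j
  | succ t ih =>
    by_cases hj : j ∈ P.Sset t
    · exact P.z_update_mem t j hj
    · rw [P.z_noupdate t j hj]
      exact ih j

lemma bddBelow_objective :
    BddBelow {v : ℝ | ∃ u : Fin K → ℝ, (∀ k, u k ∈ P.Xs k) ∧ v = P.objective u} := by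
  have hh_min : ∀ k, ∃ c ∈ P.Xs k, IsMinOn (P.h k) (P.Xs k) c := fun k =>
    (P.Xs_compact k).exists_isMinOn (P.Xs_nonempty k)
      (((P.h_convex k).continuousOn isOpen_univ).mono (Set.subset_univ _))
  choose c _ hc using hh_min
  choose b hb using P.g_bddBelow
  refine ⟨∑ k, (b k + P.h k (c k)), ?_⟩
  rintro _ ⟨u, hu, rfl⟩
  exact Finset.sum_le_sum fun k _ => add_le_add (hb k u hu) (hc k (hu k))

lemma lagrangian_penalty_eq (t : ℕ) (k : Fin K) :
    ∑ j ∈ P.Nb k, (P.y (t + 1) k j * (P.x (t + 1) k j - P.z (t + 1) j)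
        + P.ρ k / 2 * (P.x (t + 1) k j - P.z (t + 1) j) ^ 2)
      = -⟪gradient (P.g k) (restr (P.Nb k) (P.z (P.τ t k))),
          restr (P.Nb k) (P.x (t + 1) k) - restr (P.Nb k) (P.z (t + 1))⟫
        + P.ρ k / 2 * ‖restr (P.Nb k) (P.x (t + 1) k) - restr (P.Nb k) (P.z (t + 1))‖ ^ 2 := by
  rw [restr_sub, inner_restr, norm_restr_sq, Finset.sum_add_distrib, ← Finset.mul_sum,
    ← Finset.sum_neg_distrib]
  congr 1
  refine Finset.sum_congr rfl fun j hj => ?_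
  rw [P.y_succ_eq_neg_gradient t k hj]
  simp

lemma node_lower_bound (t : ℕ) (k : Fin K) :
    P.g k (restr (P.Nb k) (P.z (t + 1))) + P.h k (P.z (t + 1) k)
        + ((P.ρ k - 4 * P.L k) / 2 * ∑ j ∈ P.Nb k, ‖P.x (t + 1) k j - P.z (t + 1) j‖ ^ 2
          - P.L k / 2 * ∑ j ∈ P.Nb k, ‖P.z (t + 1) j - P.z (P.τ t k) j‖ ^ 2)
      ≤ P.g k (restr (P.Nb k) (P.x (t + 1) k)) + P.h k (P.z (t + 1) k)
        + ∑ j ∈ P.Nb k, (P.y (t + 1) k j * (P.x (t + 1) k j - P.z (t + 1) j)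
          + P.ρ k / 2 * (P.x (t + 1) k j - P.z (t + 1) j) ^ 2) := by
  set u := restr (P.Nb k) (P.x (t + 1) k)
  set v := restr (P.Nb k) (P.z (t + 1))
  set w := restr (P.Nb k) (P.z (P.τ t k))
  have hdesc := descent_lemma_of_stale_gradient (P.g_diff k) (P.g_grad_lip k)
    (P.L_pos k).le u v w
  have huv : ∑ j ∈ P.Nb k, ‖P.x (t + 1) k j - P.z (t + 1) j‖ ^ 2 = ‖u - v‖ ^ 2 := by
    simp [u, v, restr_sub, norm_restr_sq]
  have hvw : ∑ j ∈ P.Nb k, ‖P.z (t + 1) j - P.z (P.τ t k) j‖ ^ 2 = ‖v - w‖ ^ 2 := by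
    simp [v, w, restr_sub, norm_restr_sq]
  rw [P.lagrangian_penalty_eq t k, huv, hvw]
  nlinarith [mul_nonneg (P.L_pos k).le (sq_nonneg ‖u - v‖)]

end ProxADMM

theorem prox_admm_one_step_lower_bound_general {K : ℕ} (P : ProxADMM K)
    -- `Popt` is the optimal value of `min Σ_k g_k({x_n}_{n∈N_k}) + h_k(x_k)`
    -- subject to `x_k ∈ X_k` for every `k`
    (Popt : ℝ)
    (hPopt : Popt = sInf {v : ℝ | ∃ u : Fin K → ℝ, (∀ k, u k ∈ P.Xs k) ∧
      v = ∑ k, (P.g k (restr (P.Nb k) u) + P.h k (u k))})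
    (t : ℕ) :
    (∀ k : Fin K, ∀ j ∈ P.Nb k,
      P.y (t + 1) k j = - gradient (P.g k) (restr (P.Nb k) (P.z (P.τ t k))) j) ∧
    Popt + ∑ k, ((P.ρ k - 4 * P.L k) / 2 *
          ∑ j ∈ P.Nb k, ‖P.x (t + 1) k j - P.z (t + 1) j‖ ^ 2
        - P.L k / 2 * ∑ j ∈ P.Nb k, ‖P.z (t + 1) j - P.z (P.τ t k) j‖ ^ 2)
      ≤ P.Lag (P.x (t + 1)) (P.z (t + 1)) (P.y (t + 1)) := by
  refine ⟨fun k j hj => P.y_succ_eq_neg_gradient t k hj, ?_⟩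
  have hPopt_le : Popt ≤ P.objective (P.z (t + 1)) :=
    hPopt ▸ csInf_le P.bddBelow_objective ⟨_, P.z_mem_Xs (t + 1), rfl⟩
  have hnodes := Finset.sum_le_sum fun k (_ : k ∈ Finset.univ) => P.node_lower_bound t k
  rw [Finset.sum_add_distrib] at hnodes
  unfold ProxADMM.objective at hPopt_le
  unfold ProxADMM.Lag
  linarith

/-- One-step lower bound on the augmented Lagrangian (asynchronous proximal
ADMM, assumptions (A1)-(A3)): the dual iterates satisfy
`y_{kj}^{t+1} = −[∇g_k(z_k^{[t+1]_k})]_j`, and the Lagrangian at time `t+1` is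
bounded below in terms of the optimal value `P` of the original problem. -/
theorem prox_admm_one_step_lower_bound {K : ℕ} (P : ProxADMM K)
    (α β : Fin K → ℝ)
    (hα : ∀ k, α k = P.ρ k * P.freq k / 2
      - (7 * P.L k / (2 * P.ρ k ^ 2) + 1 / P.ρ k) * ((P.Nb k).card : ℝ) * P.L k ^ 2
          * ((P.Td k : ℝ) + 1) ^ 2
      - ((P.Nb k).card : ℝ) * P.L k * (P.Td k : ℝ) ^ 2 / 2)
    (hβ : ∀ k, β k = P.ρ k - 7 * P.L k)
    (hA3 : ∀ k, 0 < α k ∧ 0 < β k)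
    -- `Popt` is the optimal value of `min Σ_k g_k({x_n}_{n∈N_k}) + h_k(x_k)`
    -- subject to `x_k ∈ X_k` for every `k`
    (Popt : ℝ)
    (hPopt : Popt = sInf {v : ℝ | ∃ u : Fin K → ℝ, (∀ k, u k ∈ P.Xs k) ∧
      v = ∑ k, (P.g k (restr (P.Nb k) u) + P.h k (u k))})
    (t : ℕ) :
    (∀ k : Fin K, ∀ j ∈ P.Nb k,
      P.y (t + 1) k j = - gradient (P.g k) (restr (P.Nb k) (P.z (P.τ t k))) j) ∧
    Popt + ∑ k, ((P.ρ k - 4 * P.L k) / 2 *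
          ∑ j ∈ P.Nb k, ‖P.x (t + 1) k j - P.z (t + 1) j‖ ^ 2
        - P.L k / 2 * ∑ j ∈ P.Nb k, ‖P.z (t + 1) j - P.z (P.τ t k) j‖ ^ 2)
      ≤ P.Lag (P.x (t + 1)) (P.z (t + 1)) (P.y (t + 1)) :=
  prox_admm_one_step_lower_bound_general P Popt hPopt t
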